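/- Let H be a half-coribbon Hopf algebra with half-coribbon functional t which is convolution-invertible, squares to the ribbon functional θ (i.e., t(a_(1))t(a_(2)) = θ(a)), and satisfies t(ab) = t(b_(1))t(a_(1))R(a_(2)⊗b_(2)). For a right H-comodule V define ht_V(v) = v_(0)·t(v_(1)). Then ht_{V⊗W} = (ht_V ⊗ ht_W) ∘ (fl ∘ c_{V,W}), where c_{V,W}(v⊗w) = w_(0)⊗v_(0)·R(v_(1)⊗w_(1)) is the braiding and fl is the flip of tensor factors. -/
import Mathlib


/-!
STATEMENT 11: Let H be a half-coribbon Hopf algebra: a coquasitriangular Hopf algebra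
with co-R-matrix R, ribbon functional θ, and a half-coribbon functional t which is
convolution-invertible, squares to θ (t(a₁)t(a₂) = θ(a)), and satisfies
t(ab) = t(b₁)t(a₁)R(a₂⊗b₂).  For a right H-comodule V define ht_V(v) = v₀·t(v₁).
Then ht_{V⊗W} = (ht_V ⊗ ht_W) ∘ (fl ∘ c_{V,W}), where
c_{V,W}(v⊗w) = w₀⊗v₀·R(v₁⊗w₁) is the braiding and fl the flip.
-/

set_option maxHeartbeats 1000000
noncomputable section
open scoped TensorProduct
open TensorProduct LinearMap

variable {k H V W : Type} [Field k] [Ring H] [Algebra k H]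
  [AddCommGroup V] [Module k V] [AddCommGroup W] [Module k W]

/-- The half twist ht_V(v) = v₀ · t(v₁) of a comodule with coaction δV. -/
def ht (δV : V →ₗ[k] V ⊗[k] H) (t : H →ₗ[k] k) : V →ₗ[k] V :=
  (TensorProduct.rid k V).toLinearMap ∘ₗ (TensorProduct.map LinearMap.id t) ∘ₗ δV

/-- The codiagonal coaction on V ⊗ W: v⊗w ↦ (v₀⊗w₀) ⊗ v₁w₁. -/
def codiag (δV : V →ₗ[k] V ⊗[k] H) (δW : W →ₗ[k] W ⊗[k] H) :
    V ⊗[k] W →ₗ[k] (V ⊗[k] W) ⊗[k] H :=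
  (TensorProduct.map LinearMap.id (LinearMap.mul' k H))
    ∘ₗ (TensorProduct.tensorTensorTensorComm k V H W H).toLinearMap
    ∘ₗ (TensorProduct.map δV δW)

/-- The braiding c_{V,W}(v⊗w) = w₀ ⊗ v₀ · R(v₁⊗w₁). -/
def braidc (δV : V →ₗ[k] V ⊗[k] H) (δW : W →ₗ[k] W ⊗[k] H)
    (R : H ⊗[k] H →ₗ[k] k) : V ⊗[k] W →ₗ[k] W ⊗[k] V :=
  (TensorProduct.rid k (W ⊗[k] V)).toLinearMap
    ∘ₗ (TensorProduct.map (TensorProduct.comm k V W).toLinearMap R)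
    ∘ₗ (TensorProduct.tensorTensorTensorComm k V H W H).toLinearMap
    ∘ₗ (TensorProduct.map δV δW)

/-- Auxiliary scalar functional S((a⊗a')⊗(b⊗b')) = t(a)t(b)R(a'⊗b'). -/
def Sfun (t : H →ₗ[k] k) (R : H ⊗[k] H →ₗ[k] k) :
    (H ⊗[k] H) ⊗[k] (H ⊗[k] H) →ₗ[k] k :=
  (LinearMap.mul' k k)
    ∘ₗ (TensorProduct.map ((LinearMap.mul' k k) ∘ₗ (TensorProduct.map t t)) R)
    ∘ₗ (TensorProduct.tensorTensorTensorComm k H H H H).toLinearMap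

/-- Auxiliary map Phi((v⊗(a⊗a'))⊗(w⊗(b⊗b'))) = t(a)t(b)R(a'⊗b') • (v⊗w). -/
def Phi (t : H →ₗ[k] k) (R : H ⊗[k] H →ₗ[k] k) :
    (V ⊗[k] (H ⊗[k] H)) ⊗[k] (W ⊗[k] (H ⊗[k] H)) →ₗ[k] V ⊗[k] W :=
  (TensorProduct.rid k (V ⊗[k] W)).toLinearMap
    ∘ₗ (TensorProduct.map LinearMap.id (Sfun t R))
    ∘ₗ (TensorProduct.tensorTensorTensorComm k V (H ⊗[k] H) W (H ⊗[k] H)).toLinearMap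

theorem stmt11
    -- Hopf algebra structure on H:
    (Δ : H →ₐ[k] H ⊗[k] H) (ε : H →ₐ[k] k) (S : H →ₗ[k] H)
    (hcoassoc : (TensorProduct.assoc k H H H).toLinearMap
        ∘ₗ (TensorProduct.map Δ.toLinearMap LinearMap.id) ∘ₗ Δ.toLinearMap
      = (TensorProduct.map LinearMap.id Δ.toLinearMap) ∘ₗ Δ.toLinearMap)
    (hcounitl : (TensorProduct.lid k H).toLinearMap
        ∘ₗ (TensorProduct.map ε.toLinearMap LinearMap.id) ∘ₗ Δ.toLinearMap
      = LinearMap.id)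
    (hcounitr : (TensorProduct.rid k H).toLinearMap
        ∘ₗ (TensorProduct.map LinearMap.id ε.toLinearMap) ∘ₗ Δ.toLinearMap
      = LinearMap.id)
    (hantipodel : (LinearMap.mul' k H)
        ∘ₗ (TensorProduct.map S LinearMap.id) ∘ₗ Δ.toLinearMap
      = (Algebra.linearMap k H) ∘ₗ ε.toLinearMap)
    (hantipoder : (LinearMap.mul' k H)
        ∘ₗ (TensorProduct.map LinearMap.id S) ∘ₗ Δ.toLinearMap
      = (Algebra.linearMap k H) ∘ₗ ε.toLinearMap)
    -- coquasitriangular structure: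
    (R Rinv : H ⊗[k] H →ₗ[k] k)
    (hRinv1 : (LinearMap.mul' k k) ∘ₗ (TensorProduct.map R Rinv)
        ∘ₗ (TensorProduct.tensorTensorTensorComm k H H H H).toLinearMap
        ∘ₗ (TensorProduct.map Δ.toLinearMap Δ.toLinearMap)
      = (LinearMap.mul' k k)
        ∘ₗ (TensorProduct.map ε.toLinearMap ε.toLinearMap))
    (hRinv2 : (LinearMap.mul' k k) ∘ₗ (TensorProduct.map Rinv R)
        ∘ₗ (TensorProduct.tensorTensorTensorComm k H H H H).toLinearMap
        ∘ₗ (TensorProduct.map Δ.toLinearMap Δ.toLinearMap)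
      = (LinearMap.mul' k k)
        ∘ₗ (TensorProduct.map ε.toLinearMap ε.toLinearMap))
    (hRmul1 : R ∘ₗ (TensorProduct.map (LinearMap.mul' k H) LinearMap.id)
      = (LinearMap.mul' k k) ∘ₗ (TensorProduct.map R R)
          ∘ₗ (TensorProduct.tensorTensorTensorComm k H H H H).toLinearMap
          ∘ₗ (TensorProduct.map LinearMap.id Δ.toLinearMap))
    (hRmul2 : R ∘ₗ (TensorProduct.map LinearMap.id (LinearMap.mul' k H))
      = (LinearMap.mul' k k) ∘ₗ (TensorProduct.map R R)
          ∘ₗ (TensorProduct.tensorTensorTensorComm k H H H H).toLinearMap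
          ∘ₗ (TensorProduct.map Δ.toLinearMap (TensorProduct.comm k H H).toLinearMap))
    (hRcomm : (TensorProduct.rid k H).toLinearMap
        ∘ₗ (TensorProduct.map
              ((LinearMap.mul' k H) ∘ₗ (TensorProduct.comm k H H).toLinearMap) R)
        ∘ₗ (TensorProduct.tensorTensorTensorComm k H H H H).toLinearMap
        ∘ₗ (TensorProduct.map Δ.toLinearMap Δ.toLinearMap)
      = (TensorProduct.lid k H).toLinearMap
        ∘ₗ (TensorProduct.map R (LinearMap.mul' k H))
        ∘ₗ (TensorProduct.tensorTensorTensorComm k H H H H).toLinearMap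
        ∘ₗ (TensorProduct.map Δ.toLinearMap Δ.toLinearMap))
    -- the half-coribbon functional t with convolution inverse tinv and square θ:
    (t tinv θ : H →ₗ[k] k)
    (ht1 : (LinearMap.mul' k k) ∘ₗ (TensorProduct.map t tinv) ∘ₗ Δ.toLinearMap
      = ε.toLinearMap)
    (ht1' : (LinearMap.mul' k k) ∘ₗ (TensorProduct.map tinv t) ∘ₗ Δ.toLinearMap
      = ε.toLinearMap)
    (ht2 : (LinearMap.mul' k k) ∘ₗ (TensorProduct.map t t) ∘ₗ Δ.toLinearMap = θ)
    (ht3 : t ∘ₗ (LinearMap.mul' k H)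
      = (LinearMap.mul' k k)
          ∘ₗ (TensorProduct.map
                ((LinearMap.mul' k k) ∘ₗ (TensorProduct.map t t)) R)
          ∘ₗ (TensorProduct.tensorTensorTensorComm k H H H H).toLinearMap
          ∘ₗ (TensorProduct.map Δ.toLinearMap Δ.toLinearMap))
    -- V and W are right H-comodules:
    (δV : V →ₗ[k] V ⊗[k] H) (δW : W →ₗ[k] W ⊗[k] H)
    (hVcoassoc : (TensorProduct.assoc k V H H).toLinearMap
        ∘ₗ (TensorProduct.map δV LinearMap.id) ∘ₗ δV
      = (TensorProduct.map LinearMap.id Δ.toLinearMap) ∘ₗ δV)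
    (hVcounit : (TensorProduct.rid k V).toLinearMap
        ∘ₗ (TensorProduct.map LinearMap.id ε.toLinearMap) ∘ₗ δV = LinearMap.id)
    (hWcoassoc : (TensorProduct.assoc k W H H).toLinearMap
        ∘ₗ (TensorProduct.map δW LinearMap.id) ∘ₗ δW
      = (TensorProduct.map LinearMap.id Δ.toLinearMap) ∘ₗ δW)
    (hWcounit : (TensorProduct.rid k W).toLinearMap
        ∘ₗ (TensorProduct.map LinearMap.id ε.toLinearMap) ∘ₗ δW = LinearMap.id) :
    -- conclusion: ht_{V⊗W} = (ht_V ⊗ ht_W) ∘ (fl ∘ c_{V,W})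
    ht (codiag δV δW) t
      = (TensorProduct.map (ht δV t) (ht δW t))
          ∘ₗ (TensorProduct.comm k W V).toLinearMap ∘ₗ (braidc δV δW R) := by

  apply TensorProduct.ext'
  intro v w
  simp only [ht, codiag, braidc, LinearMap.coe_comp, Function.comp_apply,
    LinearEquiv.coe_coe, TensorProduct.map_tmul, LinearMap.id_coe, id_eq]
  have claimL : ∀ (x : V ⊗[k] H) (y : W ⊗[k] H),
      (TensorProduct.rid k (V ⊗[k] W))
        ((TensorProduct.map LinearMap.id t)
          ((TensorProduct.map LinearMap.id (LinearMap.mul' k H))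
            ((TensorProduct.tensorTensorTensorComm k V H W H) (x ⊗ₜ[k] y))))
      = Phi t R (((TensorProduct.map LinearMap.id Δ.toLinearMap) x) ⊗ₜ[k]
          ((TensorProduct.map LinearMap.id Δ.toLinearMap) y)) := by
    intro x y
    induction x using TensorProduct.induction_on with
    | zero => simp
    | add x₁ x₂ h1 h2 =>
      simp only [map_add, TensorProduct.add_tmul, h1, h2]
    | tmul v' a =>
      induction y using TensorProduct.induction_on with
      | zero => simp
      | add y₁ y₂ h1 h2 =>
        simp only [map_add, TensorProduct.tmul_add, h1, h2]
      | tmul w' b =>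
        have h3 := LinearMap.congr_fun ht3 (a ⊗ₜ[k] b)
        simp only [LinearMap.coe_comp, Function.comp_apply, LinearEquiv.coe_coe,
          TensorProduct.map_tmul, LinearMap.mul'_apply] at h3
        simp only [Phi, Sfun, LinearMap.coe_comp, Function.comp_apply,
          LinearEquiv.coe_coe, TensorProduct.tensorTensorTensorComm_tmul,
          TensorProduct.map_tmul, LinearMap.id_coe, id_eq, LinearMap.mul'_apply,
          TensorProduct.rid_tmul, h3]
  have claimR : ∀ (x : V ⊗[k] H) (y : W ⊗[k] H),
      (TensorProduct.map (ht δV t) (ht δW t))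
        ((TensorProduct.comm k W V)
          ((TensorProduct.rid k (W ⊗[k] V))
            ((TensorProduct.map (TensorProduct.comm k V W).toLinearMap R)
              ((TensorProduct.tensorTensorTensorComm k V H W H) (x ⊗ₜ[k] y)))))
      = Phi t R (((TensorProduct.assoc k V H H) ((TensorProduct.map δV LinearMap.id) x)) ⊗ₜ[k]
          ((TensorProduct.assoc k W H H) ((TensorProduct.map δW LinearMap.id) y))) := by
    intro x y
    induction x using TensorProduct.induction_on with
    | zero => simp
    | add x₁ x₂ h1 h2 =>
      simp only [map_add, TensorProduct.add_tmul, h1, h2]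
    | tmul v' a =>
      induction y using TensorProduct.induction_on with
      | zero => simp
      | add y₁ y₂ h1 h2 =>
        simp only [map_add, TensorProduct.tmul_add, h1, h2]
      | tmul w' b =>
        simp only [TensorProduct.tensorTensorTensorComm_tmul, TensorProduct.map_tmul,
          LinearMap.id_coe, id_eq, LinearEquiv.coe_coe, TensorProduct.comm_tmul,
          TensorProduct.rid_tmul, map_smul, TensorProduct.assoc_tmul, ht,
          LinearMap.coe_comp, Function.comp_apply]
        have inner : ∀ (p : V ⊗[k] H) (q : W ⊗[k] H),
            R (a ⊗ₜ[k] b) •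
              (TensorProduct.map ((TensorProduct.rid k V).toLinearMap ∘ₗ
                  TensorProduct.map LinearMap.id t ∘ₗ LinearMap.id)
                ((TensorProduct.rid k W).toLinearMap ∘ₗ
                  TensorProduct.map LinearMap.id t ∘ₗ LinearMap.id)) (p ⊗ₜ[k] q)
            = Phi t R (((TensorProduct.assoc k V H H) (p ⊗ₜ[k] a)) ⊗ₜ[k]
                ((TensorProduct.assoc k W H H) (q ⊗ₜ[k] b))) := by
          intro p q
          induction p using TensorProduct.induction_on with
          | zero => simp
          | add p₁ p₂ h1 h2 =>
            simp only [map_add, TensorProduct.add_tmul, TensorProduct.tmul_add, smul_add, h1, h2]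
          | tmul v'' c =>
            induction q using TensorProduct.induction_on with
            | zero => simp
            | add q₁ q₂ h1 h2 =>
              simp only [map_add, TensorProduct.tmul_add, TensorProduct.add_tmul, smul_add, h1, h2]
            | tmul w'' d =>
              simp only [TensorProduct.map_tmul, LinearMap.coe_comp, Function.comp_apply,
                LinearMap.id_coe, id_eq, LinearEquiv.coe_coe, TensorProduct.rid_tmul,
                TensorProduct.assoc_tmul, Phi, Sfun,
                TensorProduct.tensorTensorTensorComm_tmul, LinearMap.mul'_apply,
                TensorProduct.smul_tmul', TensorProduct.tmul_smul, smul_smul]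
              ring_nf
        have := inner (δV v') (δW w')
        simp only [TensorProduct.map_tmul, LinearMap.coe_comp, Function.comp_apply,
          LinearMap.id_coe, id_eq, LinearEquiv.coe_coe] at this ⊢
        exact this
  have hx := LinearMap.congr_fun hVcoassoc v
  have hy := LinearMap.congr_fun hWcoassoc w
  simp only [LinearMap.coe_comp, Function.comp_apply, LinearEquiv.coe_coe] at hx hy
  rw [claimL (δV v) (δW w), ← hx, ← hy, ← claimR (δV v) (δW w)]
  simp [ht]


end
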